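/- Let (M,d,μ) be a doubling metric measure space, let x₀ ∈ M, R > 0, α > 0 and A ≥ 0, and let u ∈ L²(B(x₀,R),μ). Assume the Hölder-type estimate: for almost every x, y ∈ B(x₀, R/2), |u(x) − u(y)| ≤ A (d(x,y)/R)^α · osc_{B(x₀,R)}(u), where osc_B(u) = (⨍_B |u − ⨍_B u dμ|² dμ)^{1/2}. Then there is a constant C, depending only on the doubling constant, α and A, such that for every 0 < r ≤ R: osc_{B(x₀,r)}(u) ≤ C (r/R)^α osc_{B(x₀,R)}(u). (This is the oscillation-decay step (eq. (4.2)) in the proof of Theorem 4.5 of the paper, deducing geometric decay of the L² oscillation from the elliptic regularity estimate (ER).) -/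

import Mathlib

open MeasureTheory Metric

/-- The `L²` oscillation of `u` over the set `B`:
`osc_B(u) = (⨍_B |u - ⨍_B u dμ|² dμ)^(1/2)`. -/
noncomputable def osc2 {M : Type*} [MeasurableSpace M] (μ : Measure M)
    (B : Set M) (u : M → ℝ) : ℝ :=
  (⨍ y in B, |u y - ⨍ z in B, u z ∂μ| ^ (2 : ℝ) ∂μ) ^ ((1 : ℝ) / 2)

/-- `(M, d, μ)` is doubling with constant `C_D`. -/
def IsDoublingWith {M : Type*} [PseudoMetricSpace M] [MeasurableSpace M]
    (μ : Measure M) (C_D : ℝ) : Prop :=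
  ∀ (x : M) (r : ℝ), 0 < r → μ (ball x (2 * r)) ≤ ENNReal.ofReal C_D * μ (ball x r)

/-!
The `L²` oscillation of `u` over `s` is the standard deviation of `u` under the normalized
restriction `μ[|s]`, so both regimes are variance estimates. For `r ≤ R / 2` the Hölder bound
confines `u` on `B(x₀, r)` to an interval of length `2 A (2r/R)^α osc_R`, and Popoviciu's
inequality bounds the variance by the square of half that length. For `R / 2 < r ≤ R`, doubling
gives `μ[|B(x₀, r)] ≤ C_D • μ[|B(x₀, R)]`; since the variance is the least value of
`E[(u - c)²]`, it grows by at most the factor `C_D` under such a domination, and the factor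
`(2r/R)^α ≥ 1` absorbs `√C_D`. Both regimes thus give `osc_r ≤ (A + √C_D) (2r/R)^α osc_R`.
-/

open ProbabilityTheory
open scoped ENNReal

section Variance

variable {Ω : Type*} {mΩ : MeasurableSpace Ω} {ν ν' : Measure Ω} {X : Ω → ℝ}

lemma variance_le_sq_of_ae_abs_sub_le [IsProbabilityMeasure ν] (hX : AEMeasurable X ν) {K : ℝ}
    (h : ∀ᵐ x ∂ν, ∀ᵐ y ∂ν, |X x - X y| ≤ K) : Var[X; ν] ≤ K ^ 2 := by
  obtain ⟨x₁, hx₁⟩ := h.exists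
  have hbdd : ∀ᵐ y ∂ν, X y ∈ Set.Icc (X x₁ - K) (X x₁ + K) :=
    hx₁.mono fun y hy ↦ by
      rw [abs_sub_le_iff] at hy
      constructor <;> linarith
  calc Var[X; ν] ≤ ((X x₁ + K - (X x₁ - K)) / 2) ^ 2 := variance_le_sq_of_bounded hbdd hX
    _ = K ^ 2 := by ring

lemma variance_le_mul_variance_of_le_smul [IsProbabilityMeasure ν] [IsFiniteMeasure ν'] {c : ℝ}
    (hc : 0 ≤ c) (hle : ν ≤ ENNReal.ofReal c • ν') (hX : MemLp X 2 ν') :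
    Var[X; ν] ≤ c * Var[X; ν'] := by
  have hνν' : ν ≪ ν' := Measure.absolutelyContinuous_of_le_smul hle
  have hXν : AEStronglyMeasurable X ν := hX.aestronglyMeasurable.mono_ac hνν'
  set m := ν'[X]
  have hint : Integrable (fun ω ↦ (X ω - m) ^ 2) ν' := (hX.sub (memLp_const m)).integrable_sq
  calc Var[X; ν] = Var[fun ω ↦ X ω - m; ν] := (variance_sub_const hXν m).symm
    _ ≤ ∫ ω, (X ω - m) ^ 2 ∂ν := variance_le_expectation_sq (by fun_prop)
    _ ≤ ∫ ω, (X ω - m) ^ 2 ∂(ENNReal.ofReal c • ν') :=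
        integral_mono_measure hle (ae_of_all _ fun ω ↦ sq_nonneg _)
          (hint.smul_measure ENNReal.ofReal_ne_top)
    _ = c * Var[X; ν'] := by
        rw [integral_smul_measure, ENNReal.toReal_ofReal hc, smul_eq_mul,
          variance_eq_integral hX.aestronglyMeasurable.aemeasurable]

end Variance

section Oscillation

variable {M : Type*} [MeasurableSpace M] {μ : Measure M} {s t : Set M} {u : M → ℝ}

lemma setAverage_eq_integral_cond {E : Type*} [NormedAddCommGroup E] [NormedSpace ℝ E]
    (s : Set M) (f : M → E) : ⨍ x in s, f x ∂μ = ∫ x, f x ∂μ[|s] := by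
  rw [average_eq', Measure.restrict_apply_univ]
  rfl

lemma osc2_eq_sqrt_variance (hu : AEMeasurable u (μ.restrict s)) :
    osc2 μ s u = √Var[u; μ[|s]] := by
  have hu' : AEMeasurable u μ[|s] := hu.mono_ac Measure.smul_absolutelyContinuous
  simp only [osc2, variance_eq_integral hu', Real.sqrt_eq_rpow, setAverage_eq_integral_cond,
    Real.rpow_two, sq_abs]

lemma osc2_nonneg (μ : Measure M) (s : Set M) (u : M → ℝ) : 0 ≤ osc2 μ s u :=
  Real.rpow_nonneg (integral_nonneg fun _ ↦ by positivity) _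

lemma osc2_le_of_ae_abs_sub_le (hs0 : μ s ≠ 0) (hs : μ s ≠ ⊤) (hu : AEMeasurable u (μ.restrict s))
    {K : ℝ} (hK : 0 ≤ K) (h : ∀ᵐ x ∂μ.restrict s, ∀ᵐ y ∂μ.restrict s, |u x - u y| ≤ K) :
    osc2 μ s u ≤ K := by
  have := cond_isProbabilityMeasure_of_finite hs0 hs
  have hac : μ[|s] ≪ μ.restrict s := Measure.smul_absolutelyContinuous
  rw [osc2_eq_sqrt_variance hu, Real.sqrt_le_left hK]
  exact variance_le_sq_of_ae_abs_sub_le (hu.mono_ac hac)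
    (hac.ae_le (h.mono fun x hx ↦ hac.ae_le hx))

lemma cond_le_smul_cond (hst : s ⊆ t) (hs0 : μ s ≠ 0) {c : ℝ≥0∞} (hc_top : c ≠ ∞)
    (hc : μ t ≤ c * μ s) :
    μ[|s] ≤ c • μ[|t] := by
  have ht0 : μ t ≠ 0 := ne_bot_of_le_ne_bot hs0 (measure_mono hst)
  have hinv : (μ s)⁻¹ ≤ c * (μ t)⁻¹ := by
    rw [← div_eq_mul_inv, ENNReal.le_div_iff_mul_le (Or.inl ht0) (Or.inr hc_top),
      mul_comm, ← div_eq_mul_inv]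
    exact ENNReal.div_le_of_le_mul hc
  rw [Measure.le_iff]
  intro A hA
  rw [Measure.smul_apply, cond_apply' hA, cond_apply' hA, smul_eq_mul, ← mul_assoc]
  exact mul_le_mul' hinv (measure_mono (Set.inter_subset_inter_left A hst))

lemma osc2_le_sqrt_mul_osc2 (hst : s ⊆ t) (hs0 : μ s ≠ 0) (ht : μ t ≠ ⊤) {c : ℝ} (hc0 : 0 ≤ c)
    (hc : μ t ≤ ENNReal.ofReal c * μ s) (hu : MemLp u 2 (μ.restrict t)) :
    osc2 μ s u ≤ √c * osc2 μ t u := by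
  have ht0 : μ t ≠ 0 := ne_bot_of_le_ne_bot hs0 (measure_mono hst)
  have := cond_isProbabilityMeasure_of_finite hs0 (ne_top_of_le_ne_top ht (measure_mono hst))
  have := cond_isProbabilityMeasure_of_finite ht0 ht
  have hu_t : AEMeasurable u (μ.restrict t) := hu.aestronglyMeasurable.aemeasurable
  rw [osc2_eq_sqrt_variance (hu_t.mono_measure (Measure.restrict_mono hst le_rfl)),
    osc2_eq_sqrt_variance hu_t, ← Real.sqrt_mul hc0]
  exact Real.sqrt_le_sqrt <| variance_le_mul_variance_of_le_smul hc0
    (cond_le_smul_cond hst hs0 ENNReal.ofReal_ne_top hc)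
    (hu.smul_measure (ENNReal.inv_ne_top.2 ht0))

lemma ae_ae_restrict_of_subset (hs : MeasurableSet s) (hst : s ⊆ t) {P Q : M → M → Prop}
    (h : ∀ᵐ x ∂μ.restrict t, ∀ᵐ y ∂μ.restrict t, P x y)
    (hPQ : ∀ x ∈ s, ∀ y ∈ s, P x y → Q x y) :
    ∀ᵐ x ∂μ.restrict s, ∀ᵐ y ∂μ.restrict s, Q x y := by
  filter_upwards [ae_restrict_of_ae_restrict_of_subset hst h, ae_restrict_mem hs] with x hx hxs
  filter_upwards [ae_restrict_of_ae_restrict_of_subset hst hx, ae_restrict_mem hs] with y hy hys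
  exact hPQ x hxs y hys hy

end Oscillation

section Ball

variable {M : Type*} [PseudoMetricSpace M] [MeasurableSpace M] {μ : Measure M} {x₀ : M}
  {u : M → ℝ}

lemma osc2_ball_le_of_holder [OpensMeasurableSpace M] {r ρ R α A K : ℝ} (hr : 0 < r)
    (hrρ : r ≤ ρ) (hR : 0 < R) (hα : 0 < α) (hA : 0 ≤ A) (hK : 0 ≤ K)
    (hr0 : μ (ball x₀ r) ≠ 0) (hr_top : μ (ball x₀ r) ≠ ⊤)
    (hu : AEMeasurable u (μ.restrict (ball x₀ r)))
    (hholder : ∀ᵐ x ∂μ.restrict (ball x₀ ρ), ∀ᵐ y ∂μ.restrict (ball x₀ ρ),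
      |u x - u y| ≤ A * (dist x y / R) ^ α * K) :
    osc2 μ (ball x₀ r) u ≤ A * (2 * r / R) ^ α * K := by
  refine osc2_le_of_ae_abs_sub_le hr0 hr_top hu (by positivity) <|
    ae_ae_restrict_of_subset measurableSet_ball (ball_subset_ball hrρ) hholder
      fun x hx y hy hxy ↦ hxy.trans ?_
  have : dist x y < 2 * r := by
    linarith [dist_triangle_right x y x₀, mem_ball.1 hx, mem_ball.1 hy]
  gcongr

lemma osc2_ball_le_sqrt_mul_osc2_of_doubling {C_D r R : ℝ} (hdoub : IsDoublingWith μ C_D)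
    (hC_D : 0 ≤ C_D) (hr : 0 < r) (hrR : r ≤ R) (hRr : R ≤ 2 * r) (hr0 : μ (ball x₀ r) ≠ 0)
    (hR_top : μ (ball x₀ R) ≠ ⊤) (hu : MemLp u 2 (μ.restrict (ball x₀ R))) :
    osc2 μ (ball x₀ r) u ≤ √C_D * osc2 μ (ball x₀ R) u :=
  osc2_le_sqrt_mul_osc2 (ball_subset_ball hrR) hr0 hR_top hC_D
    ((measure_mono (ball_subset_ball hRr)).trans (hdoub x₀ r hr)) hu

end Ball

/-- **Oscillation decay** (eq. (4.2) in the proof of Theorem 4.5).  On a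
doubling metric measure space, if `u ∈ L²(B(x₀,R))` satisfies the Hölder-type
estimate `|u(x) − u(y)| ≤ A (d(x,y)/R)^α osc_{B(x₀,R)}(u)` for a.e.
`x, y ∈ B(x₀,R/2)`, then there is `C` (depending only on the doubling
constant, `α` and `A`) such that
`osc_{B(x₀,r)}(u) ≤ C (r/R)^α osc_{B(x₀,R)}(u)` for every `0 < r ≤ R`. -/
theorem oscillation_decay
    {M : Type*} [MetricSpace M] [MeasurableSpace M] [BorelSpace M]
    (μ : Measure M) (C_D : ℝ) (hC_D : 1 ≤ C_D) (hdoub : IsDoublingWith μ C_D)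
    (hμ : ∀ (x : M) (r : ℝ), 0 < r → 0 < μ (ball x r) ∧ μ (ball x r) < ⊤)
    (α A : ℝ) (hα : 0 < α) (hA : 0 ≤ A) :
    ∃ C : ℝ, 0 < C ∧ ∀ (x₀ : M) (R : ℝ) (u : M → ℝ), 0 < R →
      MemLp u 2 (μ.restrict (ball x₀ R)) →
      (∀ᵐ x ∂(μ.restrict (ball x₀ (R / 2))), ∀ᵐ y ∂(μ.restrict (ball x₀ (R / 2))),
        |u x - u y| ≤ A * (dist x y / R) ^ α * osc2 μ (ball x₀ R) u) →
      ∀ r : ℝ, 0 < r → r ≤ R →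
        osc2 μ (ball x₀ r) u ≤ C * (r / R) ^ α * osc2 μ (ball x₀ R) u := by
  refine ⟨2 ^ α * (A + √C_D), by positivity, ?_⟩
  intro x₀ R u hR hu hholder r hr hrR
  obtain ⟨hr0, hr_top⟩ := hμ x₀ r hr
  have hoscR := osc2_nonneg μ (ball x₀ R) u
  suffices osc2 μ (ball x₀ r) u ≤ (A + √C_D) * (2 * r / R) ^ α * osc2 μ (ball x₀ R) u by
    rwa [mul_div_assoc, Real.mul_rpow zero_le_two (by positivity), ← mul_assoc,
      mul_comm (A + √C_D)] at this
  rcases le_or_gt r (R / 2) with hsmall | hlarge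
  · calc osc2 μ (ball x₀ r) u ≤ A * (2 * r / R) ^ α * osc2 μ (ball x₀ R) u :=
          osc2_ball_le_of_holder hr hsmall hR hα hA hoscR hr0.ne' hr_top.ne
            (hu.aestronglyMeasurable.aemeasurable.mono_measure
              (Measure.restrict_mono (ball_subset_ball hrR) le_rfl)) hholder
      _ ≤ (A + √C_D) * (2 * r / R) ^ α * osc2 μ (ball x₀ R) u := by
          gcongr
          exact le_add_of_nonneg_right (Real.sqrt_nonneg _)
  · have hone : 1 ≤ (2 * r / R) ^ α :=
      Real.one_le_rpow ((one_le_div hR).2 (by linarith)) hα.le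
    calc osc2 μ (ball x₀ r) u ≤ √C_D * osc2 μ (ball x₀ R) u :=
          osc2_ball_le_sqrt_mul_osc2_of_doubling hdoub (by linarith) hr hrR (by linarith)
            hr0.ne' (hμ x₀ R hR).2.ne hu
      _ ≤ (A + √C_D) * (2 * r / R) ^ α * osc2 μ (ball x₀ R) u := by
          gcongr
          calc √C_D ≤ A + √C_D := le_add_of_nonneg_left hA
            _ ≤ (A + √C_D) * (2 * r / R) ^ α := le_mul_of_one_le_right (by positivity) hone
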